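/- arXiv:1110.3795 — 2 statements merged into one kernel-verified Lean document; each statement's English description precedes it below -/
import Mathlib

section
/- For binary outcomes a,b ∈ {0,1} and binary settings x,y ∈ {0,1}, any distribution admitting a local decomposition P(a,b|x,y) = Σ_λ q(λ) P_A(a|x,λ) P_B(b|y,λ) satisfies the CHSH inequality: E(0,0) + E(0,1) + E(1,0) − E(1,1) ≤ 2, where E(x,y) = Σ_{a,b} (−1)^{a+b} P(a,b|x,y). -/
/-- any local distribution with binary inputs and outputs
satisfies the CHSH inequality. -/
theorem local_satisfies_CHSH
    {Λ : Type} [Fintype Λ]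
    (P : Fin 2 → Fin 2 → Fin 2 → Fin 2 → ℝ)  -- P x y a b
    (q : Λ → ℝ) (PA : Fin 2 → Λ → Fin 2 → ℝ) (PB : Fin 2 → Λ → Fin 2 → ℝ)
    (hq : ∀ l, 0 ≤ q l) (hq1 : ∑ l : Λ, q l = 1)
    (hPApos : ∀ x l a, 0 ≤ PA x l a) (hPAnorm : ∀ x l, ∑ a : Fin 2, PA x l a = 1)
    (hPBpos : ∀ y l b, 0 ≤ PB y l b) (hPBnorm : ∀ y l, ∑ b : Fin 2, PB y l b = 1)
    (hdec : ∀ x y a b, P x y a b = ∑ l : Λ, q l * PA x l a * PB y l b)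
    (E : Fin 2 → Fin 2 → ℝ)
    (hE : ∀ x y, E x y = ∑ a : Fin 2, ∑ b : Fin 2,
      (-1 : ℝ) ^ ((a : ℕ) + (b : ℕ)) * P x y a b) :
    E 0 0 + E 0 1 + E 1 0 - E 1 1 ≤ 2 := by
  set A : Fin 2 → Λ → ℝ := fun x l => PA x l 0 - PA x l 1 with hA
  set B : Fin 2 → Λ → ℝ := fun y l => PB y l 0 - PB y l 1 with hB
  have hEsum : ∀ x y, E x y = ∑ l : Λ, q l * (A x l * B y l) := by
    intro x y
    rw [hE]
    simp only [hdec, Fin.sum_univ_two, Finset.mul_sum, ← Finset.sum_add_distrib,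
      ← Finset.sum_sub_distrib]
    apply Finset.sum_congr rfl
    intro l _
    simp [hA, hB]
    ring
  have hAbd : ∀ x l, |A x l| ≤ 1 := by
    intro x l
    have h := hPAnorm x l
    rw [Fin.sum_univ_two] at h
    have h0 := hPApos x l 0
    have h1 := hPApos x l 1
    rw [abs_le]; constructor <;> simp [hA] <;> linarith
  have hBbd : ∀ y l, |B y l| ≤ 1 := by
    intro y l
    have h := hPBnorm y l
    rw [Fin.sum_univ_two] at h
    have h0 := hPBpos y l 0
    have h1 := hPBpos y l 1
    rw [abs_le]; constructor <;> simp [hB] <;> linarith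
  have key : ∀ l, A 0 l * B 0 l + A 0 l * B 1 l + A 1 l * B 0 l - A 1 l * B 1 l ≤ 2 := by
    intro l
    obtain ⟨a0l, a0r⟩ := abs_le.mp (hAbd 0 l)
    obtain ⟨a1l, a1r⟩ := abs_le.mp (hAbd 1 l)
    obtain ⟨b0l, b0r⟩ := abs_le.mp (hBbd 0 l)
    obtain ⟨b1l, b1r⟩ := abs_le.mp (hBbd 1 l)
    rcases le_total 0 (B 0 l + B 1 l) with h1 | h1 <;>
      rcases le_total 0 (B 0 l - B 1 l) with h2 | h2
    · nlinarith [mul_nonneg (by linarith : (0:ℝ) ≤ 1 - A 0 l) h1,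
        mul_nonneg (by linarith : (0:ℝ) ≤ 1 - A 1 l) h2]
    · nlinarith [mul_nonneg (by linarith : (0:ℝ) ≤ 1 - A 0 l) h1,
        mul_nonneg (by linarith : (0:ℝ) ≤ 1 + A 1 l) (by linarith : (0:ℝ) ≤ B 1 l - B 0 l)]
    · nlinarith [mul_nonneg (by linarith : (0:ℝ) ≤ 1 + A 0 l) (by linarith : (0:ℝ) ≤ -(B 0 l + B 1 l)),
        mul_nonneg (by linarith : (0:ℝ) ≤ 1 - A 1 l) h2]
    · nlinarith [mul_nonneg (by linarith : (0:ℝ) ≤ 1 + A 0 l) (by linarith : (0:ℝ) ≤ -(B 0 l + B 1 l)),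
        mul_nonneg (by linarith : (0:ℝ) ≤ 1 + A 1 l) (by linarith : (0:ℝ) ≤ B 1 l - B 0 l)]
  calc E 0 0 + E 0 1 + E 1 0 - E 1 1
      = ∑ l : Λ, q l * (A 0 l * B 0 l + A 0 l * B 1 l + A 1 l * B 0 l - A 1 l * B 1 l) := by
        simp only [hEsum, ← Finset.sum_add_distrib, ← Finset.sum_sub_distrib]
        apply Finset.sum_congr rfl; intro l _; ring
    _ ≤ ∑ l : Λ, q l * 2 := by
        apply Finset.sum_le_sum
        intro l _
        exact mul_le_mul_of_nonneg_left (key l) (hq l)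
    _ = 2 := by rw [← Finset.sum_mul, hq1, one_mul]
end

section
/- With the configuration of the previous statement (c = 1, v = r > 1, positions d_B, d_C, d_D and times t_B = t_C = 2/(1+r), t_D = 1/r), the spacetime point D' = (d_D, t') at which light signals emitted from B and C at their measurement events first both arrive, i.e. t' = max(t_B + |d_D − d_B|, t_C + |d_D − d_C|), lies strictly outside the future light-cone of A = (0,0): d_D > 0 and t' < d_D, so information about A's setting arriving at D' would constitute superluminal signalling from A. -/
/-- the point `D' = (dD, t')` where light signals from the
measurement events of `B` and `C` first both arrive lies strictly outside the
future light-cone of `A = (0,0)`: `t' < dD`. -/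
theorem superluminal_point_outside_lightcone (r : ℝ) (hr : 1 < r)
    (dB dC dD tB tC t' : ℝ)
    (hdB : dB = (1 / 4) * (1 + 1 / r) + 1 / (1 + r))
    (hdC : dC = (3 / 4) * (1 + 1 / r) - 1 / (1 + r))
    (hdD : dD = 1)
    (htB : tB = 2 / (1 + r)) (htC : tC = 2 / (1 + r))
    (ht' : t' = max (tB + |dD - dB|) (tC + |dD - dC|)) :
    0 < dD ∧ t' < dD := by
  have hr0 : (0:ℝ) < r := by linarith
  have h1 : (0:ℝ) < 1 + r := by linarith
  have e1 : r * (1 / r) = 1 := mul_one_div_cancel (ne_of_gt hr0)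
  have e2 : (1 + r) * (1 / (1 + r)) = 1 := mul_one_div_cancel (ne_of_gt h1)
  have a1 : 1 / r < 1 := by rw [div_lt_one hr0]; linarith
  have a0 : 0 < 1 / r := by positivity
  have b0 : 0 < 1 / (1 + r) := by positivity
  have b1 : 1 / (1 + r) < 1 / 2 := by
    rw [div_lt_div_iff₀ h1 (by norm_num)]; linarith
  have hB : 0 ≤ dD - dB := by rw [hdD, hdB]; nlinarith
  have hC : 0 ≤ dD - dC := by rw [hdD, hdC]; nlinarith
  refine ⟨by rw [hdD]; norm_num, ?_⟩
  rw [ht', abs_of_nonneg hB, abs_of_nonneg hC, hdD, hdB, hdC, htB, htC]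
  have key : 4 * r < (1 + r) ^ 2 := by nlinarith
  refine max_lt ?_ ?_ <;>
  · rw [div_add' _ _ _ (ne_of_gt h1)]
    field_simp
    nlinarith
end
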